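/- arXiv:2309.10749 — 9 statements merged into one kernel-verified Lean document; each statement's English description precedes it below -/
import Mathlib

section
/- Suppose j ≠ k, i ∉ {j,k}, d_j(g) = d_k(g), and neither ij nor ik is an edge of g. Then u_i(g + ik) = u_i(g + ij), and moreover u_i(g + ij) − u_i(g) > u_i(g + ij + ik) − u_i(g + ij); that is, the marginal value to i of an additional relationship is strictly decreasing. -/
variable {V : Type*}

/-- Degree of vertex `i` in the simple graph `g`. -/
noncomputable def deg [Fintype V] (g : SimpleGraph V) (i : V) : ℕ :=
  (g.neighborSet i).ncard

/-- Per-period utility of vertex `i` in the graph `g`: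
`u_i(g) = α·v·(1 − (1−p)^{d_i(g)}) − Σ_{j ∈ N_i(g)} α·c·(1 − (1−p)^{d_j(g)})/d_j(g)`. -/
noncomputable def util [Fintype V] (α v c p : ℝ) (g : SimpleGraph V) (i : V) : ℝ :=
  α * v * (1 - (1 - p) ^ deg g i) -
    ∑ j ∈ (g.neighborSet i).toFinite.toFinset,
      α * c * (1 - (1 - p) ^ deg g j) / (deg g j)

lemma edge_swap (i j : V) : SimpleGraph.edge i j = SimpleGraph.edge j i := by
  ext x y
  rw [SimpleGraph.edge_adj, SimpleGraph.edge_adj]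
  tauto

lemma neighborSet_sup_edge [Fintype V] (g : SimpleGraph V) (i j : V) (hij : i ≠ j) :
    (g ⊔ SimpleGraph.edge i j).neighborSet i = insert j (g.neighborSet i) := by
  ext x
  simp only [Set.mem_insert_iff, SimpleGraph.mem_neighborSet, SimpleGraph.sup_adj,
    SimpleGraph.edge_adj]
  constructor
  · rintro (h | ⟨h1 | h1, h2⟩)
    · exact Or.inr h
    · exact Or.inl h1.2
    · exact absurd h1.1 hij
  · rintro (rfl | h)
    · exact Or.inr (by simp [hij])
    · exact Or.inl h

lemma neighborSet_sup_edge_other [Fintype V] (g : SimpleGraph V) (i j l : V)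
    (hli : l ≠ i) (hlj : l ≠ j) :
    (g ⊔ SimpleGraph.edge i j).neighborSet l = g.neighborSet l := by
  ext x
  simp [SimpleGraph.edge_adj, hli, hlj]

lemma deg_sup_edge [Fintype V] (g : SimpleGraph V) (i j : V) (hij : i ≠ j)
    (hadj : ¬ g.Adj i j) : deg (g ⊔ SimpleGraph.edge i j) i = deg g i + 1 := by
  rw [deg, neighborSet_sup_edge g i j hij,
    Set.ncard_insert_of_notMem (by simpa using fun h => hadj h) (Set.toFinite _)]
  rfl

lemma deg_sup_edge_other [Fintype V] (g : SimpleGraph V) (i j l : V)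
    (hli : l ≠ i) (hlj : l ≠ j) :
    deg (g ⊔ SimpleGraph.edge i j) l = deg g l := by
  rw [deg, neighborSet_sup_edge_other g i j l hli hlj]; rfl

lemma sum_add_edge [Fintype V] (g : SimpleGraph V) (i j : V) (hij : i ≠ j)
    (hadj : ¬ g.Adj i j) (F : ℕ → ℝ) [DecidableEq V] :
    ∑ l ∈ ((g ⊔ SimpleGraph.edge i j).neighborSet i).toFinite.toFinset,
        F (deg (g ⊔ SimpleGraph.edge i j) l)
      = (∑ l ∈ (g.neighborSet i).toFinite.toFinset, F (deg g l)) + F (deg g j + 1) := by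
  have hfs : ((g ⊔ SimpleGraph.edge i j).neighborSet i).toFinite.toFinset
      = insert j (g.neighborSet i).toFinite.toFinset := by
    ext x
    simp [neighborSet_sup_edge g i j hij]
  rw [hfs, Finset.sum_insert (by simpa using fun h => hadj h)]
  have hdj : deg (g ⊔ SimpleGraph.edge i j) j = deg g j + 1 := by
    have h := deg_sup_edge g j i (Ne.symm hij) (fun h => hadj h.symm)
    rwa [edge_swap j i] at h
  rw [hdj, add_comm]
  congr 1
  apply Finset.sum_congr rfl
  intro l hl
  simp only [Set.Finite.mem_toFinset, SimpleGraph.mem_neighborSet] at hl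
  rw [deg_sup_edge_other g i j l (fun h => g.loopless.irrefl i (h ▸ hl))
    (fun h => hadj (h ▸ hl))]

theorem decreasing_marginal_value [Fintype V] (α v c p : ℝ)
    (hα : 0 < α) (hv : 0 < v) (hc : 0 < c) (hp0 : 0 < p) (hp1 : p < 1)
    (g : SimpleGraph V) (i j k : V)
    (hjk : j ≠ k) (hij : i ≠ j) (hik : i ≠ k)
    (hdeg : deg g j = deg g k)
    (hadj1 : ¬ g.Adj i j) (hadj2 : ¬ g.Adj i k) :
    util α v c p (g ⊔ SimpleGraph.edge i k) i = util α v c p (g ⊔ SimpleGraph.edge i j) i ∧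
    util α v c p (g ⊔ SimpleGraph.edge i j) i - util α v c p g i >
      util α v c p (g ⊔ SimpleGraph.edge i j ⊔ SimpleGraph.edge i k) i -
        util α v c p (g ⊔ SimpleGraph.edge i j) i := by
  classical
  set F : ℕ → ℝ := fun n => α * c * (1 - (1 - p) ^ n) / n with hF
  set d := deg g i with hd
  set a := deg g j with ha
  set S := ∑ l ∈ (g.neighborSet i).toFinite.toFinset, F (deg g l) with hS
  have hadj1' : ¬ (g ⊔ SimpleGraph.edge i j).Adj i k := by
    simp [SimpleGraph.edge_adj, hadj2, hjk.symm, hik, hij]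
  have hdegk : deg (g ⊔ SimpleGraph.edge i j) k = deg g k :=
    deg_sup_edge_other g i j k (Ne.symm hik) (Ne.symm hjk)
  have hdegi : deg (g ⊔ SimpleGraph.edge i j) i = d + 1 := deg_sup_edge g i j hij hadj1
  have hdegi2 : deg (g ⊔ SimpleGraph.edge i j ⊔ SimpleGraph.edge i k) i = d + 2 := by
    rw [deg_sup_edge _ i k hik hadj1', hdegi]
  have hu0 : util α v c p g i = α * v * (1 - (1 - p) ^ d) - S := rfl
  have hu1 : util α v c p (g ⊔ SimpleGraph.edge i j) i
      = α * v * (1 - (1 - p) ^ (d + 1)) - (S + F (a + 1)) := by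
    rw [util, hdegi, sum_add_edge g i j hij hadj1 F]
  have hu1' : util α v c p (g ⊔ SimpleGraph.edge i k) i
      = α * v * (1 - (1 - p) ^ (d + 1)) - (S + F (deg g k + 1)) := by
    rw [util, deg_sup_edge g i k hik hadj2, sum_add_edge g i k hik hadj2 F]
  have hu2 : util α v c p (g ⊔ SimpleGraph.edge i j ⊔ SimpleGraph.edge i k) i
      = α * v * (1 - (1 - p) ^ (d + 2)) - ((S + F (a + 1)) + F (a + 1)) := by
    rw [util, hdegi2, sum_add_edge (g ⊔ SimpleGraph.edge i j) i k hik hadj1' F,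
      sum_add_edge g i j hij hadj1 F, hdegk, ← hdeg]
  constructor
  · rw [hu1, hu1', ← hdeg]
  · rw [hu0, hu1, hu2]
    have hq : 0 < (1 - p) ^ d := pow_pos (by linarith) d
    have e1 : (1 - p) ^ (d + 1) = (1 - p) ^ d * (1 - p) := pow_succ _ _
    have e2 : (1 - p) ^ (d + 2) = (1 - p) ^ d * (1 - p) * (1 - p) := by
      rw [pow_succ, e1]
    rw [e1, e2]
    nlinarith [mul_pos (mul_pos hα hv) (mul_pos hq (mul_pos hp0 hp0))]
end

section
/- Suppose ij is an edge of g, jk is not an edge of g, and k ∉ {i,j}. Then u_i(g + jk) > u_i(g); that is, each player strictly prefers her neighbors to have more links. -/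
variable {V : Type*}

lemma key_lt (p : ℝ) (hp0 : 0 < p) (hp1 : p < 1) (d : ℕ) (hd : 1 ≤ d) :
    (1 - (1 - p) ^ (d + 1)) / ((d : ℝ) + 1) < (1 - (1 - p) ^ d) / d := by
  set q : ℝ := 1 - p with hq
  have hq0 : 0 < q := by linarith
  have hq1 : q < 1 := by linarith
  have hd0 : (0 : ℝ) < d := by exact_mod_cast hd
  have hkey : q ^ d * (1 + d * p) < 1 := by
    have h1 : (1 : ℝ) + d * (p / q) ≤ (1 / q) ^ d := by
      have hx : (-2 : ℝ) ≤ p / q := by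
        have := div_pos hp0 hq0; linarith
      have := one_add_mul_le_pow hx d
      have he : (1 : ℝ) + p / q = 1 / q := by field_simp; linarith
      rwa [he] at this
    have h2 : (d : ℝ) * p < d * (p / q) := by
      have : p < p / q := by
        rw [lt_div_iff₀ hq0]; nlinarith
      have hd1 : (1:ℝ) ≤ d := by exact_mod_cast hd
      nlinarith
    have h3 : q ^ d * (1 / q) ^ d = 1 := by
      rw [← mul_pow]; rw [mul_one_div, div_self hq0.ne', one_pow]
    calc q ^ d * (1 + d * p) < q ^ d * (1 + d * (p / q)) := by
          apply mul_lt_mul_of_pos_left _ (by positivity); linarith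
      _ ≤ q ^ d * (1 / q) ^ d := by
          apply mul_le_mul_of_nonneg_left h1 (by positivity)
      _ = 1 := h3
  have hexp : q ^ d * (1 + (d:ℝ) * p) = q ^ d + (d:ℝ) * q ^ d - (d:ℝ) * (q ^ d * q) := by
    rw [hq]; ring
  have hkey' : q ^ d + (d:ℝ) * q ^ d - (d:ℝ) * (q ^ d * q) < 1 := by rw [← hexp]; exact hkey
  rw [div_lt_div_iff₀ (by positivity) hd0, pow_succ]
  nlinarith [hkey']

theorem prefers_connected_neighbors [Fintype V] (α v c p : ℝ)
    (hα : 0 < α) (hv : 0 < v) (hc : 0 < c) (hp0 : 0 < p) (hp1 : p < 1)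
    (g : SimpleGraph V) (i j k : V)
    (hij : g.Adj i j) (hjk : ¬ g.Adj j k) (hki : k ≠ i) (hkj : k ≠ j) :
    util α v c p (g ⊔ SimpleGraph.edge j k) i > util α v c p g i := by
  set g' := g ⊔ SimpleGraph.edge j k with hg'
  have hijne : i ≠ j := hij.ne
  -- neighbor set of i unchanged
  have hNi : g'.neighborSet i = g.neighborSet i := by
    ext x
    simp only [hg', SimpleGraph.mem_neighborSet, SimpleGraph.sup_adj, SimpleGraph.edge_adj]
    constructor
    · rintro (h | ⟨⟨h1, h2⟩ | ⟨h1, h2⟩, hne⟩)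
      · exact h
      · exact absurd h1 hijne
      · exact absurd h1 (Ne.symm hki)
    · exact fun h => Or.inl h
  -- neighbor set of j gains k
  have hNj : g'.neighborSet j = insert k (g.neighborSet j) := by
    ext x
    simp only [hg', SimpleGraph.mem_neighborSet, SimpleGraph.sup_adj, SimpleGraph.edge_adj,
      Set.mem_insert_iff]
    constructor
    · rintro (h | ⟨⟨h1, h2⟩ | ⟨h1, h2⟩, hne⟩)
      · exact Or.inr h
      · exact Or.inl h2
      · exact absurd h1 (Ne.symm hkj)
    · rintro (rfl | h)
      · tauto
      · exact Or.inl h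
  -- neighbor set of k gains j
  have hNk : g'.neighborSet k = insert j (g.neighborSet k) := by
    ext x
    simp only [hg', SimpleGraph.mem_neighborSet, SimpleGraph.sup_adj, SimpleGraph.edge_adj,
      Set.mem_insert_iff]
    constructor
    · rintro (h | ⟨⟨h1, h2⟩ | ⟨h1, h2⟩, hne⟩)
      · exact Or.inr h
      · exact absurd h1 hkj
      · exact Or.inl h2
    · rintro (rfl | h)
      · tauto
      · exact Or.inl h
  -- neighbor set of others unchanged
  have hNm : ∀ m, m ≠ j → m ≠ k → g'.neighborSet m = g.neighborSet m := by
    intro m hmj hmk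
    ext x
    simp only [hg', SimpleGraph.mem_neighborSet, SimpleGraph.sup_adj, SimpleGraph.edge_adj]
    constructor
    · rintro (h | ⟨⟨h1, h2⟩ | ⟨h1, h2⟩, hne⟩)
      · exact h
      · exact absurd h1 hmj
      · exact absurd h1 hmk
    · exact fun h => Or.inl h
  have hdi : deg g' i = deg g i := by unfold deg; rw [hNi]
  have hdj : deg g' j = deg g j + 1 := by
    unfold deg
    rw [hNj, Set.ncard_insert_of_notMem (by simpa using hjk) (Set.toFinite _)]
  have hdk : deg g' k = deg g k + 1 := by
    unfold deg
    rw [hNk, Set.ncard_insert_of_notMem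
      (by simpa using fun h => hjk h.symm) (Set.toFinite _)]
  have hdm : ∀ m, m ≠ j → m ≠ k → deg g' m = deg g m := by
    intro m hmj hmk; unfold deg; rw [hNm m hmj hmk]
  -- positivity of degrees of neighbors of i
  have hdeg_pos : ∀ m, g.Adj i m → 1 ≤ deg g m := by
    intro m hm
    have : (g.neighborSet m).Nonempty := ⟨i, hm.symm⟩
    have h2 := (Set.ncard_pos (Set.toFinite _)).mpr this
    unfold deg
    omega
  have hfs : (g'.neighborSet i).toFinite.toFinset = (g.neighborSet i).toFinite.toFinset := by
    ext x; simp [hNi]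
  unfold util
  rw [hdi, hfs]
  apply sub_lt_sub_left
  apply Finset.sum_lt_sum
  · intro m hm
    have hm' : g.Adj i m := by simpa using hm
    have hd1 : 1 ≤ deg g m := hdeg_pos m hm'
    by_cases hmj : m = j
    · subst hmj
      rw [hdj]
      push_cast
      rw [mul_div_assoc, mul_div_assoc]
      exact le_of_lt (mul_lt_mul_of_pos_left
        (key_lt p hp0 hp1 (deg g m) hd1) (by positivity))
    · by_cases hmk : m = k
      · subst hmk
        rw [hdk]
        push_cast
        rw [mul_div_assoc, mul_div_assoc]
        exact le_of_lt (mul_lt_mul_of_pos_left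
          (key_lt p hp0 hp1 (deg g m) hd1) (by positivity))
      · rw [hdm m hmj hmk]
  · refine ⟨j, by simpa using hij, ?_⟩
    rw [hdj]
    push_cast
    rw [mul_div_assoc, mul_div_assoc]
    exact mul_lt_mul_of_pos_left (key_lt p hp0 hp1 (deg g j) (hdeg_pos j hij)) (by positivity)
end

section
/- Suppose ij is an edge of both graphs g and g̃ (on the same finite vertex set), d_i(g̃) ≤ d_i(g), and d_j(g̃) = d_j(g). Then u_i(g̃) − u_i(g̃ − ij) ≥ u_i(g) − u_i(g − ij). -/
variable {V : Type*}

lemma nbr_sdiff_self [Fintype V] (g : SimpleGraph V) (i j : V) :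
    (g \ SimpleGraph.edge i j).neighborSet i = g.neighborSet i \ {j} := by
  ext k
  rw [SimpleGraph.mem_neighborSet, SimpleGraph.sdiff_adj, SimpleGraph.edge_adj,
    Set.mem_diff, Set.mem_singleton_iff, SimpleGraph.mem_neighborSet]
  constructor
  · rintro ⟨h, h2⟩
    exact ⟨h, fun hk => h2 ⟨Or.inl ⟨rfl, hk⟩, h.ne⟩⟩
  · rintro ⟨h, hk⟩
    refine ⟨h, ?_⟩
    rintro ⟨(⟨-, rfl⟩ | ⟨rfl, rfl⟩), hne⟩
    · exact hk rfl
    · exact h.ne rfl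

lemma nbr_sdiff_other [Fintype V] (g : SimpleGraph V) (i j k : V) (hki : k ≠ i) (hkj : k ≠ j) :
    (g \ SimpleGraph.edge i j).neighborSet k = g.neighborSet k := by
  ext l
  rw [SimpleGraph.mem_neighborSet, SimpleGraph.sdiff_adj, SimpleGraph.edge_adj,
    SimpleGraph.mem_neighborSet]
  constructor
  · exact fun h => h.1
  · intro h
    refine ⟨h, ?_⟩
    rintro ⟨(⟨h1, -⟩ | ⟨h1, -⟩), -⟩
    · exact hki h1
    · exact hkj h1

lemma deg_sdiff_self [Fintype V] (g : SimpleGraph V) (i j : V) (hg : g.Adj i j) :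
    deg (g \ SimpleGraph.edge i j) i = deg g i - 1 := by
  rw [deg, nbr_sdiff_self]
  exact Set.ncard_diff_singleton_of_mem hg

lemma util_diff [Fintype V] (α v c p : ℝ) (g : SimpleGraph V) (i j : V) (hg : g.Adj i j) :
    util α v c p g i - util α v c p (g \ SimpleGraph.edge i j) i
      = α * v * ((1 - p) ^ (deg g i - 1) - (1 - p) ^ deg g i)
        - α * c * (1 - (1 - p) ^ deg g j) / (deg g j) := by
  classical
  have hfin := (g.neighborSet i).toFinite
  have hj : j ∈ hfin.toFinset := by simpa using hg
  have hsum :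
      ∑ k ∈ ((g \ SimpleGraph.edge i j).neighborSet i).toFinite.toFinset,
        α * c * (1 - (1 - p) ^ deg (g \ SimpleGraph.edge i j) k) / (deg (g \ SimpleGraph.edge i j) k)
      = ∑ k ∈ hfin.toFinset.erase j, α * c * (1 - (1 - p) ^ deg g k) / (deg g k) := by
    apply Finset.sum_congr
    · ext k
      simp only [Set.Finite.mem_toFinset, Finset.mem_erase, nbr_sdiff_self, Set.mem_diff,
        Set.mem_singleton_iff, Set.Finite.mem_toFinset]
      tauto
    · intro k hk
      simp only [Finset.mem_erase, Set.Finite.mem_toFinset] at hk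
      have hki : k ≠ i := by rintro rfl; exact g.irrefl hk.2
      rw [show deg (g \ SimpleGraph.edge i j) k = deg g k from by
        rw [deg, deg, nbr_sdiff_other g i j k hki hk.1]]
  rw [util, util, deg_sdiff_self g i j hg, hsum,
    ← Finset.add_sum_erase _ _ hj]
  ring

theorem marginal_value_monotone [Fintype V] (α v c p : ℝ)
    (hα : 0 < α) (hv : 0 < v) (hc : 0 < c) (hp0 : 0 < p) (hp1 : p < 1)
    (g gt : SimpleGraph V) (i j : V)
    (hg : g.Adj i j) (hgt : gt.Adj i j)
    (hdi : deg gt i ≤ deg g i) (hdj : deg gt j = deg g j) :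
    util α v c p gt i - util α v c p (gt \ SimpleGraph.edge i j) i ≥
      util α v c p g i - util α v c p (g \ SimpleGraph.edge i j) i := by
  rw [util_diff α v c p g i j hg, util_diff α v c p gt i j hgt, hdj]
  have hq0 : (0:ℝ) ≤ 1 - p := by linarith
  have hq1 : (1:ℝ) - p ≤ 1 := by linarith
  have key : ∀ d : ℕ, 1 ≤ d → (1 - p) ^ (d - 1) - (1 - p) ^ d = (1 - p) ^ (d - 1) * p := by
    intro d hd
    have : (1 - p) ^ d = (1 - p) ^ (d - 1) * (1 - p) := by
      rw [← pow_succ, Nat.sub_add_cancel hd]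
    rw [this]; ring
  have h1 : 1 ≤ deg gt i := by
    have : i ∈ gt.neighborSet j := hgt.symm
    have hpos : 0 < deg gt i := by
      rw [deg, Set.ncard_pos (gt.neighborSet i).toFinite]
      exact ⟨j, hgt⟩
    omega
  have h2 : 1 ≤ deg g i := le_trans h1 hdi
  rw [key _ h1, key _ h2]
  have hmono : (1 - p) ^ (deg g i - 1) ≤ (1 - p) ^ (deg gt i - 1) :=
    pow_le_pow_of_le_one hq0 hq1 (by omega)
  have h3 := mul_le_mul_of_nonneg_right hmono hp0.le
  have h4 := mul_le_mul_of_nonneg_left h3 (mul_nonneg hα.le hv.le)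
  linarith
end

section
/- Define, for integers n ≥ 1, c(n) = δ·α·v·p·(1−p)^{n−1} / (1 − δ + (α/n)·δ·(1 − (1−p)^n)) + γ. Then c(n) > c(n+1) for every integer n ≥ 1, and c(n) → γ as n → ∞. -/
open Filter

/-- The cutoff cost `c(n)` for sustaining `n` relationships. -/
noncomputable def cutoff (α v p δ γ : ℝ) (n : ℕ) : ℝ :=
  δ * α * v * p * (1 - p) ^ (n - 1) /
    (1 - δ + (α / n) * δ * (1 - (1 - p) ^ n)) + γ

lemma key_ineq (q : ℝ) (hq0 : 0 ≤ q) (hq1 : q < 1) (m : ℕ) :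
    0 < ((m : ℝ) + 1) - ((m : ℝ) + 2) * q + q ^ (m + 2) := by
  induction m with
  | zero => simpa using by nlinarith [sq_nonneg (1 - q)]
  | succ k ih =>
    have h1 : q ^ (k + 2) < 1 := pow_lt_one₀ hq0 hq1 (by omega)
    have h2 : q ^ (k + 3) = q * q ^ (k + 2) := by ring
    have h3 : 0 < (1 - q) * (1 - q ^ (k + 2)) :=
      mul_pos (by linarith) (by linarith)
    push_cast
    push_cast at ih
    nlinarith [ih, h3]

theorem cutoff_strictAnti_and_tendsto (α v p δ γ : ℝ)
    (hα : 0 < α) (hv : 0 < v) (hp0 : 0 < p) (hp1 : p < 1)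
    (hδ0 : 0 < δ) (hδ1 : δ < 1) (hγ : 0 ≤ γ) :
    (∀ n : ℕ, 1 ≤ n → cutoff α v p δ γ n > cutoff α v p δ γ (n + 1)) ∧
    Tendsto (fun n : ℕ => cutoff α v p δ γ n) atTop (nhds γ) := by
  set q : ℝ := 1 - p with hqdef
  have hq0 : 0 < q := by simp [hqdef]; linarith
  have hq1 : q < 1 := by simp [hqdef]; linarith
  have hN : 0 < δ * α * v * p := by positivity
  have hDlb : ∀ n : ℕ, 1 - δ ≤ 1 - δ + (α / (n : ℝ)) * δ * (1 - q ^ n) := by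
    intro n
    rcases Nat.eq_zero_or_pos n with h | h
    · subst h; simp
    · have hqn : q ^ n ≤ 1 := pow_le_one₀ hq0.le hq1.le
      have : 0 ≤ (α / (n : ℝ)) * δ * (1 - q ^ n) := by
        apply mul_nonneg (mul_nonneg _ hδ0.le) (by linarith)
        positivity
      linarith
  have hDpos : ∀ n : ℕ, 0 < 1 - δ + (α / (n : ℝ)) * δ * (1 - q ^ n) := by
    intro n; have := hDlb n; linarith
  constructor
  · intro n hn
    obtain ⟨m, rfl⟩ : ∃ m, n = m + 1 := ⟨n - 1, by omega⟩
    have hm1 : (0 : ℝ) < (m : ℝ) + 1 := by positivity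
    have hm2 : (0 : ℝ) < (m : ℝ) + 2 := by positivity
    have hkey := key_ineq q hq0.le hq1 m
    have hD1 := hDpos (m + 1)
    have hD2 := hDpos (m + 2)
    push_cast at hD1 hD2
    -- T2 ≥ q * T1
    have h2 : (α / ((m : ℝ) + 1)) * (q * (1 - q ^ (m + 1))) ≤
        (α / ((m : ℝ) + 2)) * (1 - q ^ (m + 2)) := by
      rw [div_mul_eq_mul_div, div_mul_eq_mul_div, div_le_div_iff₀ hm1 hm2]
      rw [pow_succ q (m + 1)] at hkey ⊢
      nlinarith [hkey, hα.le, mul_nonneg hα.le hkey.le]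
    have hqD : q * (1 - δ + (α / ((m : ℝ) + 1)) * δ * (1 - q ^ (m + 1))) <
        1 - δ + (α / ((m : ℝ) + 2)) * δ * (1 - q ^ (m + 2)) := by
      have h3 : 0 < (1 - δ) * (1 - q) := mul_pos (by linarith) (by linarith)
      nlinarith [mul_le_mul_of_nonneg_left h2 hδ0.le]
    show cutoff α v p δ γ (m + 2) < cutoff α v p δ γ (m + 1)
    unfold cutoff
    have e1 : (m + 1 : ℕ) - 1 = m := by omega
    have e2 : (m + 2 : ℕ) - 1 = m + 1 := by omega
    rw [e1, e2]
    push_cast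
    have hpow : (0 : ℝ) < q ^ m := pow_pos hq0 m
    rw [add_lt_add_iff_right, div_lt_div_iff₀ hD2 hD1]
    have : δ * α * v * p * q ^ (m + 1) = (δ * α * v * p * q ^ m) * q := by ring
    calc δ * α * v * p * q ^ (m + 1) *
          (1 - δ + α / ((m : ℝ) + 1) * δ * (1 - q ^ (m + 1)))
        = (δ * α * v * p * q ^ m) *
          (q * (1 - δ + α / ((m : ℝ) + 1) * δ * (1 - q ^ (m + 1)))) := by ring
      _ < (δ * α * v * p * q ^ m) *
          (1 - δ + α / ((m : ℝ) + 2) * δ * (1 - q ^ (m + 2))) :=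
          mul_lt_mul_of_pos_left hqD (by positivity)
      _ = δ * α * v * p * q ^ m *
          (1 - δ + α / ((m : ℝ) + 2) * δ * (1 - q ^ (m + 2))) := by ring
  · have h0 : Tendsto (fun n : ℕ => δ * α * v * p * q ^ (n - 1) /
        (1 - δ + (α / (n : ℝ)) * δ * (1 - q ^ n))) atTop (nhds 0) := by
      apply squeeze_zero
      · intro n
        exact div_nonneg (mul_nonneg hN.le (pow_nonneg hq0.le _)) (hDpos n).le
      · intro n
        show _ ≤ δ * α * v * p * q ^ (n - 1) / (1 - δ)
        gcongr
        · exact hDlb n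
      · have hpow : Tendsto (fun n : ℕ => q ^ (n - 1)) atTop (nhds 0) :=
          (tendsto_pow_atTop_nhds_zero_of_lt_one hq0.le hq1).comp
            (tendsto_sub_atTop_nat 1)
        have := hpow.const_mul (δ * α * v * p)
        simpa [div_eq_mul_inv, mul_comm, mul_assoc, mul_left_comm] using
          this.div_const (1 - δ)
    have : Tendsto (fun n : ℕ => δ * α * v * p * q ^ (n - 1) /
        (1 - δ + (α / (n : ℝ)) * δ * (1 - q ^ n)) + γ) atTop (nhds (0 + γ)) :=
      h0.add tendsto_const_nhds
    rw [zero_add] at this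
    exact this
end

section
/- There exists a natural number B* such that for every integer n ≥ 1, f(n) ≥ 0 if and only if n ≤ B*; that is, the cooperation bound exists (and the inequality f(n) ≥ 0 fails for every n > B*). -/
/-- `f(n) = −(c − γ) + (δ/(1−δ))·( α·v·((1−p)^{n−1} − (1−p)^n) − (α·c/n)·(1 − (1−p)^n) )`. -/
noncomputable def fpay (α v c p δ γ : ℝ) (n : ℕ) : ℝ :=
  -(c - γ) + (δ / (1 - δ)) *
    (α * v * ((1 - p) ^ (n - 1) - (1 - p) ^ n) - (α * c / n) * (1 - (1 - p) ^ n))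

/-- Step lemma: if `f(m+2) ≥ 0` then `f(m+1) ≥ 0`. -/
lemma fpay_step (α v c p δ γ : ℝ)
    (hα : 0 < α) (hv : 0 < v) (hc : 0 < c) (hp0 : 0 < p) (hp1 : p < 1)
    (hδ0 : 0 < δ) (hδ1 : δ < 1) (hγ0 : 0 ≤ γ) (hγc : γ < c) (m : ℕ)
    (h : 0 ≤ fpay α v c p δ γ (m + 2)) : 0 ≤ fpay α v c p δ γ (m + 1) := by
  have hq0 : (0:ℝ) < 1 - p := by linarith
  have hq1 : (1:ℝ) - p < 1 := by linarith
  set a : ℝ := (1 - p) ^ m with hadef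
  have ha0 : 0 < a := pow_pos hq0 m
  have ha1 : a ≤ 1 := pow_le_one₀ hq0.le hq1.le
  set K : ℝ := δ / (1 - δ) with hKdef
  have hK : 0 < K := div_pos hδ0 (by linarith)
  set N : ℝ := (m : ℝ) + 1 with hNdef
  have hN1 : (1:ℝ) ≤ N := by
    rw [hNdef]; have : (0:ℝ) ≤ (m:ℝ) := Nat.cast_nonneg m; linarith
  have hN0 : (0:ℝ) < N := by linarith
  have hN10 : (0:ℝ) < N + 1 := by linarith
  -- Bernoulli : 1 - (1-p)^(m+1) ≤ N * p
  have hB : 1 - (1 - p) * a ≤ N * p := by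
    have hber := one_add_mul_le_pow (show (-2:ℝ) ≤ -p by linarith) (m + 1)
    have hpow : (1 + -p) ^ (m + 1) = (1 - p) * a := by
      rw [hadef, pow_succ]; ring
    rw [hpow] at hber
    push_cast at hber
    rw [hNdef]; linarith
  have hqa1 : (1 - p) * a ≤ 1 := by nlinarith
  -- key inequality
  have hkey : (1 - p) * (α * c / N * (1 - (1 - p) * a))
      ≤ α * c / (N + 1) * (1 - (1 - p) * ((1 - p) * a)) := by
    rw [show (1 - p) * (α * c / N * (1 - (1 - p) * a))
          = (1 - p) * (α * c) * (1 - (1 - p) * a) / N by ring,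
        show α * c / (N + 1) * (1 - (1 - p) * ((1 - p) * a))
          = α * c * (1 - (1 - p) * ((1 - p) * a)) / (N + 1) by ring,
        div_le_div_iff₀ hN0 hN10]
    have h1 : 0 ≤ α * c * ((N * p) - (1 - (1 - p) * a)) :=
      mul_nonneg (by positivity) (by linarith)
    have h2 : 0 ≤ α * c * (p * (1 - (1 - p) * a)) :=
      mul_nonneg (by positivity) (mul_nonneg (by linarith) (by linarith))
    nlinarith [h1, h2]
  -- rewrite the hypothesis and goal
  have hrw2 : fpay α v c p δ γ (m + 2)
      = -(c - γ) + K * (α * v * ((1 - p) * a - (1 - p) * ((1 - p) * a))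
          - α * c / (N + 1) * (1 - (1 - p) * ((1 - p) * a))) := by
    simp only [fpay, show m + 2 - 1 = m + 1 from rfl, hadef, hKdef, hNdef]
    push_cast
    ring
  have hrw1 : fpay α v c p δ γ (m + 1)
      = -(c - γ) + K * (α * v * (a - (1 - p) * a) - α * c / N * (1 - (1 - p) * a)) := by
    simp only [fpay, show m + 1 - 1 = m from rfl, hadef, hKdef, hNdef]
    push_cast
    ring
  rw [hrw2] at h
  rw [hrw1]
  -- multiply the goal by (1-p) > 0
  have hmul : 0 ≤ (1 - p) *
      (-(c - γ) + K * (α * v * (a - (1 - p) * a) - α * c / N * (1 - (1 - p) * a))) := by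
    have hk2 : K * ((1 - p) * (α * c / N * (1 - (1 - p) * a)))
        ≤ K * (α * c / (N + 1) * (1 - (1 - p) * ((1 - p) * a))) :=
      mul_le_mul_of_nonneg_left hkey hK.le
    have hcg : 0 ≤ p * (c - γ) := mul_nonneg (by linarith) (by linarith)
    nlinarith [h, hk2, hcg]
  exact nonneg_of_mul_nonneg_right hmul hq0

/-- There is some `n ≥ 1` with `f(n) < 0`. -/
lemma fpay_witness (α v c p δ γ : ℝ)
    (hα : 0 < α) (hv : 0 < v) (hc : 0 < c) (hp0 : 0 < p) (hp1 : p < 1)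
    (hδ0 : 0 < δ) (hδ1 : δ < 1) (hγ0 : 0 ≤ γ) (hγc : γ < c) :
    ∃ n : ℕ, 1 ≤ n ∧ fpay α v c p δ γ n < 0 := by
  have hq0 : (0:ℝ) < 1 - p := by linarith
  have hq1 : (1:ℝ) - p < 1 := by linarith
  have hK : 0 < δ / (1 - δ) := div_pos hδ0 (by linarith)
  have hε : 0 < (c - γ) / (δ / (1 - δ) * (α * v)) :=
    div_pos (by linarith) (by positivity)
  obtain ⟨k, hk⟩ := exists_pow_lt_of_lt_one hε hq1
  refine ⟨k + 1, le_add_self, ?_⟩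
  have hpow1 : (1 - p) ^ (k + 1) ≤ 1 := pow_le_one₀ hq0.le hq1.le
  have hpowpos : 0 < (1 - p) ^ (k + 1) := pow_pos hq0 _
  have hNpos : (0:ℝ) < (k : ℝ) + 1 := by positivity
  have ht1 : 0 ≤ α * c / ((k:ℝ) + 1) * (1 - (1 - p) ^ (k + 1)) :=
    mul_nonneg (by positivity) (by linarith)
  have hvk : δ / (1 - δ) * (α * v * ((1 - p) ^ k - (1 - p) ^ (k + 1))) < c - γ := by
    have h1 : α * v * ((1 - p) ^ k - (1 - p) ^ (k + 1)) ≤ α * v * (1 - p) ^ k := by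
      nlinarith [pow_pos hq0 (k+1), mul_pos hα hv]
    have h2 : δ / (1 - δ) * (α * v * (1 - p) ^ k) < c - γ := by
      rw [lt_div_iff₀ (by positivity)] at hk
      calc δ / (1 - δ) * (α * v * (1 - p) ^ k)
          = (1 - p) ^ k * (δ / (1 - δ) * (α * v)) := by ring
        _ < c - γ := hk
    calc δ / (1 - δ) * (α * v * ((1 - p) ^ k - (1 - p) ^ (k + 1)))
        ≤ δ / (1 - δ) * (α * v * (1 - p) ^ k) := mul_le_mul_of_nonneg_left h1 hK.le
      _ < c - γ := h2
  have hfe : fpay α v c p δ γ (k + 1)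
      = -(c - γ) + δ / (1 - δ) *
        (α * v * ((1 - p) ^ k - (1 - p) ^ (k + 1))
          - α * c / ((k:ℝ) + 1) * (1 - (1 - p) ^ (k + 1))) := by
    simp only [fpay, show k + 1 - 1 = k from rfl]
    push_cast
    ring
  rw [hfe]
  have ht1' : 0 ≤ δ / (1 - δ) * (α * c / ((k:ℝ) + 1) * (1 - (1 - p) ^ (k + 1))) :=
    mul_nonneg hK.le ht1
  nlinarith [hvk, ht1']

theorem cooperation_bound_exists (α v c p δ γ : ℝ)
    (hα : 0 < α) (hv : 0 < v) (hc : 0 < c) (hp0 : 0 < p) (hp1 : p < 1)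
    (hδ0 : 0 < δ) (hδ1 : δ < 1) (hγ0 : 0 ≤ γ) (hγc : γ < c) :
    ∃ B : ℕ, ∀ n : ℕ, 1 ≤ n → (fpay α v c p δ γ n ≥ 0 ↔ n ≤ B) := by
  classical
  have hex : ∃ n : ℕ, 1 ≤ n ∧ fpay α v c p δ γ n < 0 :=
    fpay_witness α v c p δ γ hα hv hc hp0 hp1 hδ0 hδ1 hγ0 hγc
  set m := Nat.find hex with hmdef
  obtain ⟨hm1, hmneg⟩ := Nat.find_spec hex
  refine ⟨m - 1, fun n hn => ?_⟩
  constructor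
  · intro hge
    by_contra hgt
    push_neg at hgt
    have hmn : m ≤ n := by omega
    have hall : ∀ j : ℕ, fpay α v c p δ γ (m + j) < 0 := by
      intro j
      induction j with
      | zero => simpa using hmneg
      | succ k ih =>
        by_contra hcon
        push_neg at hcon
        obtain ⟨l, hl⟩ : ∃ l, m + k = l + 1 := ⟨m + k - 1, by omega⟩
        have hstep := fpay_step α v c p δ γ hα hv hc hp0 hp1 hδ0 hδ1 hγ0 hγc l
          (by rw [show l + 2 = m + (k + 1) by omega]; exact hcon)
        rw [show l + 1 = m + k by omega] at hstep
        linarith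
    have hn' := hall (n - m)
    rw [Nat.add_sub_cancel' hmn] at hn'
    linarith [hge]
  · intro hle
    have hlt : n < m := by omega
    have hnot := Nat.find_min hex hlt
    push_neg at hnot
    exact hnot hn
end

section
/- Let B(α,p,v,c,δ,γ) denote the cooperation bound, i.e., the natural number B such that for every integer n ≥ 1, f(n) ≥ 0 if and only if n ≤ B. Then B is nondecreasing in δ, nondecreasing in v, nondecreasing in γ, and nonincreasing in c (each comparison holding the other parameters fixed within their ranges, with γ < c maintained). -/
/-- `B` is the cooperation bound for the given parameters. -/
def IsCoopBound (α v c p δ γ : ℝ) (B : ℕ) : Prop :=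
  ∀ n : ℕ, 1 ≤ n → (fpay α v c p δ γ n ≥ 0 ↔ n ≤ B)

lemma coop_le {α v c p δ γ α' v' c' p' δ' γ' : ℝ} {B B' : ℕ}
    (hmono : ∀ n : ℕ, 1 ≤ n → fpay α v c p δ γ n ≥ 0 → fpay α' v' c' p' δ' γ' n ≥ 0)
    (h1 : IsCoopBound α v c p δ γ B) (h2 : IsCoopBound α' v' c' p' δ' γ' B') :
    B ≤ B' := by
  by_contra h
  push_neg at h
  have hn : 1 ≤ B' + 1 := by omega
  have hle : B' + 1 ≤ B := by omega
  have := (h2 (B' + 1) hn).mp (hmono _ hn ((h1 (B' + 1) hn).mpr hle))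
  omega

lemma fpay_facts {p : ℝ} (hp0 : 0 < p) (hp1 : p < 1) {n : ℕ} (hn : 1 ≤ n) :
    0 ≤ (1 - p) ^ (n - 1) - (1 - p) ^ n ∧ 0 ≤ 1 - (1 - p) ^ n ∧ (1:ℝ) ≤ (n : ℝ) := by
  have hq0 : (0:ℝ) ≤ 1 - p := by linarith
  have hq1 : (1:ℝ) - p ≤ 1 := by linarith
  refine ⟨?_, ?_, ?_⟩
  · have : (1 - p) ^ n = (1 - p) ^ (n - 1) * (1 - p) := by
      rw [← pow_succ]; congr 1; omega
    rw [this]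
    nlinarith [pow_nonneg hq0 (n - 1)]
  · nlinarith [pow_le_one₀ hq0 hq1 (n := n)]
  · exact_mod_cast hn

theorem cooperation_bound_monotone (α p : ℝ) (hα : 0 < α) (hp0 : 0 < p) (hp1 : p < 1) :
    -- nondecreasing in δ
    (∀ v c δ δ' γ : ℝ, ∀ B B' : ℕ, 0 < v → 0 < c → 0 < δ → δ < 1 → 0 < δ' → δ' < 1 →
      0 ≤ γ → γ < c → δ ≤ δ' →
      IsCoopBound α v c p δ γ B → IsCoopBound α v c p δ' γ B' → B ≤ B') ∧
    -- nondecreasing in v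
    (∀ v v' c δ γ : ℝ, ∀ B B' : ℕ, 0 < v → 0 < v' → 0 < c → 0 < δ → δ < 1 →
      0 ≤ γ → γ < c → v ≤ v' →
      IsCoopBound α v c p δ γ B → IsCoopBound α v' c p δ γ B' → B ≤ B') ∧
    -- nondecreasing in γ
    (∀ v c δ γ γ' : ℝ, ∀ B B' : ℕ, 0 < v → 0 < c → 0 < δ → δ < 1 →
      0 ≤ γ → γ < c → 0 ≤ γ' → γ' < c → γ ≤ γ' →
      IsCoopBound α v c p δ γ B → IsCoopBound α v c p δ γ' B' → B ≤ B') ∧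
    -- nonincreasing in c
    (∀ v c c' δ γ : ℝ, ∀ B B' : ℕ, 0 < v → 0 < c → 0 < c' → 0 < δ → δ < 1 →
      0 ≤ γ → γ < c → γ < c' → c ≤ c' →
      IsCoopBound α v c p δ γ B → IsCoopBound α v c' p δ γ B' → B' ≤ B) := by
  refine ⟨?_, ?_, ?_, ?_⟩
  · intro v c δ δ' γ B B' hv hc hδ0 hδ1 hδ'0 hδ'1 hγ hγc hδδ h1 h2
    refine coop_le (fun n hn hf => ?_) h1 h2
    obtain ⟨hD, hE, hN⟩ := fpay_facts hp0 hp1 hn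
    unfold fpay at hf ⊢
    set A := α * v * ((1 - p) ^ (n - 1) - (1 - p) ^ n) - α * c / ↑n * (1 - (1 - p) ^ n) with hA
    have hr : δ / (1 - δ) ≤ δ' / (1 - δ') := by
      rw [div_le_div_iff₀ (by linarith) (by linarith)]; nlinarith
    have hrpos : 0 < δ / (1 - δ) := div_pos hδ0 (by linarith)
    have hApos : 0 ≤ A := by
      by_contra h
      push_neg at h
      nlinarith [mul_neg_of_pos_of_neg hrpos h]
    nlinarith [mul_le_mul_of_nonneg_right hr hApos]
  · intro v v' c δ γ B B' hv hv' hc hδ0 hδ1 hγ hγc hvv h1 h2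
    refine coop_le (fun n hn hf => ?_) h1 h2
    obtain ⟨hD, hE, hN⟩ := fpay_facts hp0 hp1 hn
    unfold fpay at hf ⊢
    have hrpos : 0 < δ / (1 - δ) := div_pos hδ0 (by linarith)
    nlinarith [mul_le_mul_of_nonneg_right (mul_le_mul_of_nonneg_left hvv (le_of_lt hα)) hD,
      mul_le_mul_of_nonneg_left
        (mul_le_mul_of_nonneg_right (mul_le_mul_of_nonneg_left hvv (le_of_lt hα)) hD)
        (le_of_lt hrpos)]
  · intro v c δ γ γ' B B' hv hc hδ0 hδ1 hγ hγc hγ' hγ'c hγγ h1 h2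
    refine coop_le (fun n hn hf => ?_) h1 h2
    unfold fpay at hf ⊢
    linarith
  · intro v c c' δ γ B B' hv hc hc' hδ0 hδ1 hγ hγc hγc' hcc h1 h2
    refine coop_le (fun n hn hf => ?_) h2 h1
    obtain ⟨hD, hE, hN⟩ := fpay_facts hp0 hp1 hn
    unfold fpay at hf ⊢
    have hrpos : 0 < δ / (1 - δ) := div_pos hδ0 (by linarith)
    have hNpos : (0:ℝ) < (n:ℝ) := by linarith
    have hdiv : α * c / ↑n ≤ α * c' / ↑n := by gcongr
    nlinarith [mul_le_mul_of_nonneg_right hdiv hE,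
      mul_le_mul_of_nonneg_left (mul_le_mul_of_nonneg_right hdiv hE) (le_of_lt hrpos)]
end

section
/- Let B* be a cooperation bound. If ij is an edge of g with d_i(g) = B* + 1 and d_j(g) ≤ B* + 1, then the edge ij is not sustainable at g; in particular (δ/(1−δ))·(u_i(g) − u_i(g − ij)) < c − γ. -/
variable {V : Type*}

/-- The edge `ij` is sustainable at `g`. -/
def Sustainable [Fintype V] (α v c p δ γ : ℝ) (g : SimpleGraph V) (i j : V) : Prop :=
  (δ / (1 - δ)) * (util α v c p g i - util α v c p (g \ SimpleGraph.edge i j) i) ≥ c - γ ∧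
  (δ / (1 - δ)) * (util α v c p g j - util α v c p (g \ SimpleGraph.edge i j) j) ≥ c - γ

/-- A graph is stable if every one of its edges is sustainable at it. -/
def Stable [Fintype V] (α v c p δ γ : ℝ) (g : SimpleGraph V) : Prop :=
  ∀ i j : V, g.Adj i j → Sustainable α v c p δ γ g i j

/-- `(1 - x^n)/n` is antitone in `n` for `0 ≤ x ≤ 1`. -/
lemma ratio_antitone {x : ℝ} (hx0 : 0 ≤ x) (hx1 : x ≤ 1) {m n : ℕ} (hm : 1 ≤ m)
    (hmn : m ≤ n) : (1 - x ^ n) / n ≤ (1 - x ^ m) / m := by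
  have hm0 : (0:ℝ) < m := by exact_mod_cast hm
  have hn0 : (0:ℝ) < n := by exact_mod_cast hm.trans hmn
  rw [div_le_div_iff₀ hn0 hm0]
  have hgeom : ∀ k : ℕ, 1 - x ^ k = (∑ i ∈ Finset.range k, x ^ i) * (1 - x) := by
    intro k; linear_combination geom_sum_mul x k
  set Sm := ∑ i ∈ Finset.range m, x ^ i with hSm
  set Sn := ∑ i ∈ Finset.range n, x ^ i with hSn
  set T := ∑ i ∈ Finset.Ico m n, x ^ i with hT
  have hsplit : Sm + T = Sn := by
    rw [hSm, hSn, hT, Finset.range_eq_Ico, Finset.range_eq_Ico]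
    exact Finset.sum_Ico_consecutive (fun i => x ^ i) (Nat.zero_le m) hmn
  have hTle : T ≤ ((n - m : ℕ) : ℝ) * x ^ m := by
    have := Finset.sum_le_card_nsmul (Finset.Ico m n) (fun i => x ^ i) (x ^ m)
      (fun i hi => pow_le_pow_of_le_one hx0 hx1 (Finset.mem_Ico.1 hi).1)
    simpa [Nat.card_Ico, nsmul_eq_mul] using this
  have hSmge : (m : ℝ) * x ^ m ≤ Sm := by
    have := Finset.card_nsmul_le_sum (Finset.range m) (fun i => x ^ i) (x ^ m)
      (fun i hi => pow_le_pow_of_le_one hx0 hx1 (le_of_lt (Finset.mem_range.1 hi)))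
    simpa [nsmul_eq_mul] using this
  have hcast : (n : ℝ) = (m : ℝ) + ((n - m : ℕ) : ℝ) := by
    have h := Nat.cast_sub (R := ℝ) hmn
    linarith
  have hkey : (m : ℝ) * Sn ≤ (n : ℝ) * Sm := by
    have h1 : (m : ℝ) * T ≤ (m : ℝ) * (((n - m : ℕ) : ℝ) * x ^ m) :=
      mul_le_mul_of_nonneg_left hTle (by positivity)
    have h2 : ((n - m : ℕ) : ℝ) * ((m : ℝ) * x ^ m) ≤ ((n - m : ℕ) : ℝ) * Sm :=
      mul_le_mul_of_nonneg_left hSmge (by positivity)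
    rw [hcast]
    nlinarith [hsplit]
  have hx1' : (0:ℝ) ≤ 1 - x := by linarith
  rw [hgeom n, hgeom m]
  nlinarith [mul_le_mul_of_nonneg_right hkey hx1']

lemma neighborSet_sdiff_edge_self (g : SimpleGraph V) {i j : V} (hadj : g.Adj i j) :
    (g \ SimpleGraph.edge i j).neighborSet i = g.neighborSet i \ {j} := by
  ext k
  simp only [SimpleGraph.mem_neighborSet, Set.mem_diff, Set.mem_singleton_iff]
  rw [SimpleGraph.sdiff_adj, SimpleGraph.edge_adj]
  constructor
  · rintro ⟨h1, h2⟩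
    exact ⟨h1, fun hk => h2 ⟨Or.inl ⟨rfl, hk⟩, h1.ne⟩⟩
  · rintro ⟨h1, h2⟩
    refine ⟨h1, ?_⟩
    rintro ⟨(⟨-, hk⟩ | ⟨hij, -⟩), -⟩
    · exact h2 hk
    · exact hadj.ne hij

lemma neighborSet_sdiff_edge_other (g : SimpleGraph V) {i j k : V} (hki : k ≠ i)
    (hkj : k ≠ j) : (g \ SimpleGraph.edge i j).neighborSet k = g.neighborSet k := by
  ext m
  simp only [SimpleGraph.mem_neighborSet]
  rw [SimpleGraph.sdiff_adj, SimpleGraph.edge_adj]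
  constructor
  · exact fun h => h.1
  · intro h
    refine ⟨h, ?_⟩
    rintro ⟨(⟨hk, -⟩ | ⟨hk, -⟩), -⟩
    · exact hki hk
    · exact hkj hk

theorem overloaded_link_not_sustainable [Fintype V] (α v c p δ γ : ℝ)
    (hα : 0 < α) (hv : 0 < v) (hc : 0 < c) (hp0 : 0 < p) (hp1 : p < 1)
    (hδ0 : 0 < δ) (hδ1 : δ < 1) (hγ0 : 0 ≤ γ) (hγc : γ < c)
    (B : ℕ) (hB : IsCoopBound α v c p δ γ B)
    (g : SimpleGraph V) (i j : V) (hadj : g.Adj i j)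
    (hdi : deg g i = B + 1) (hdj : deg g j ≤ B + 1) :
    ¬ Sustainable α v c p δ γ g i j ∧
    (δ / (1 - δ)) * (util α v c p g i - util α v c p (g \ SimpleGraph.edge i j) i) < c - γ := by
  classical
  set g' := g \ SimpleGraph.edge i j with hg'
  set x := 1 - p with hx
  have hx0 : 0 ≤ x := by simp [hx]; linarith
  have hx1 : x ≤ 1 := by simp [hx]; linarith
  -- degrees in g'
  have hjmem : j ∈ g.neighborSet i := hadj
  have himem : i ∈ g.neighborSet j := hadj.symm
  have hdegi' : deg g' i = B := by
    rw [hg', deg, neighborSet_sdiff_edge_self g hadj,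
      Set.ncard_diff_singleton_of_mem hjmem]
    rw [← deg, hdi]
    omega
  have hdj1 : 1 ≤ deg g j := by
    rw [deg]
    exact (Set.ncard_pos (Set.toFinite _)).2 ⟨i, himem⟩
  -- degrees of other vertices unchanged
  have hdegother : ∀ k, k ≠ i → k ≠ j → deg g' k = deg g k := by
    intro k hki hkj
    rw [hg', deg, deg, neighborSet_sdiff_edge_other g hki hkj]
  -- finsets
  have hfin : (g'.neighborSet i).toFinite.toFinset
      = ((g.neighborSet i).toFinite.toFinset).erase j := by
    ext k
    simp only [Set.Finite.mem_toFinset, Finset.mem_erase, hg',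
      neighborSet_sdiff_edge_self g hadj, Set.mem_diff, Set.mem_singleton_iff]
    tauto
  -- sum computation
  have hsum : ∑ k ∈ (g.neighborSet i).toFinite.toFinset,
        α * c * (1 - x ^ deg g k) / (deg g k)
      = α * c * (1 - x ^ deg g j) / (deg g j)
        + ∑ k ∈ (g'.neighborSet i).toFinite.toFinset,
          α * c * (1 - x ^ deg g' k) / (deg g' k) := by
    rw [hfin]
    rw [← Finset.add_sum_erase _ (fun k => α * c * (1 - x ^ deg g k) / (deg g k))
      ((Set.Finite.mem_toFinset _).2 hjmem)]
    congr 1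
    apply Finset.sum_congr rfl
    intro k hk
    have hkj : k ≠ j := (Finset.mem_erase.1 hk).1
    have hkmem : k ∈ g.neighborSet i := (Set.Finite.mem_toFinset _).1 (Finset.mem_erase.1 hk).2
    have hki : k ≠ i := (SimpleGraph.mem_neighborSet g i k |>.1 hkmem).ne'
    rw [hdegother k hki hkj]
  -- utility difference
  have hdiff : util α v c p g i - util α v c p g' i
      = α * v * (x ^ B - x ^ (B + 1)) - α * c * (1 - x ^ deg g j) / (deg g j) := by
    rw [util, util, hdegi', hdi]
    rw [hsum]
    ring
  -- comparison of cost terms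
  have hratio : (1 - x ^ (B + 1)) / ((B + 1 : ℕ) : ℝ) ≤ (1 - x ^ deg g j) / ((deg g j : ℕ) : ℝ) :=
    ratio_antitone hx0 hx1 hdj1 hdj
  have hαc : 0 < α * c := mul_pos hα hc
  have hcost : α * c * (1 - x ^ (B + 1)) / ((B + 1 : ℕ) : ℝ)
      ≤ α * c * (1 - x ^ deg g j) / ((deg g j : ℕ) : ℝ) := by
    rw [mul_div_assoc, mul_div_assoc]
    exact mul_le_mul_of_nonneg_left hratio hαc.le
  have hdiffle : util α v c p g i - util α v c p g' i
      ≤ α * v * (x ^ B - x ^ (B + 1)) - α * c * (1 - x ^ (B + 1)) / ((B + 1 : ℕ) : ℝ) := by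
    rw [hdiff]; linarith
  -- fpay at B+1 is negative
  have hfneg : fpay α v c p δ γ (B + 1) < 0 := by
    have h := hB (B + 1) (by omega)
    exact lt_of_not_ge fun hge => absurd (h.1 hge) (by omega)
  have hδpos : 0 < δ / (1 - δ) := div_pos hδ0 (by linarith)
  have hfval : fpay α v c p δ γ (B + 1)
      = -(c - γ) + (δ / (1 - δ)) *
        (α * v * (x ^ B - x ^ (B + 1)) - α * c * (1 - x ^ (B + 1)) / ((B + 1 : ℕ) : ℝ)) := by
    rw [fpay, ← hx]
    simp only [Nat.add_sub_cancel]
    ring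
  have hlt : (δ / (1 - δ)) * (util α v c p g i - util α v c p g' i) < c - γ := by
    have h1 : (δ / (1 - δ)) * (util α v c p g i - util α v c p g' i)
        ≤ (δ / (1 - δ)) * (α * v * (x ^ B - x ^ (B + 1))
          - α * c * (1 - x ^ (B + 1)) / ((B + 1 : ℕ) : ℝ)) :=
      mul_le_mul_of_nonneg_left hdiffle hδpos.le
    have h2 : fpay α v c p δ γ (B + 1) < 0 := hfneg
    rw [hfval] at h2
    linarith
  exact ⟨fun hs => absurd hs.1 (not_le.2 hlt), hlt⟩
end

section
/- Let B* ≥ 1 be a cooperation bound. If d_i(g) < B*, ij is not an edge of g, and d_j(g) = B* − 1, then u_i(g + ij) > u_i(g). -/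
variable {V : Type*}

theorem adding_link_improves [Fintype V] (α v c p δ γ : ℝ)
    (hα : 0 < α) (hv : 0 < v) (hc : 0 < c) (hp0 : 0 < p) (hp1 : p < 1)
    (hδ0 : 0 < δ) (hδ1 : δ < 1) (hγ0 : 0 ≤ γ) (hγc : γ < c)
    (B : ℕ) (hB1 : 1 ≤ B) (hB : IsCoopBound α v c p δ γ B)
    (g : SimpleGraph V) (i j : V) (hij : i ≠ j) (hadj : ¬ g.Adj i j)
    (hdi : deg g i < B) (hdj : deg g j = B - 1) :
    util α v c p (g ⊔ SimpleGraph.edge i j) i > util α v c p g i := by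
  classical
  set e := SimpleGraph.edge i j with he
  have hNi : (g ⊔ e).neighborSet i = insert j (g.neighborSet i) := by
    ext k
    simp only [SimpleGraph.mem_neighborSet, SimpleGraph.sup_adj, he, SimpleGraph.edge_adj,
      Set.mem_insert_iff]
    constructor
    · rintro (h | ⟨⟨-, rfl⟩ | ⟨rfl, rfl⟩, hne⟩)
      · exact Or.inr h
      · exact Or.inl rfl
      · exact absurd rfl hne
    · rintro (rfl | h)
      · exact Or.inr ⟨Or.inl ⟨trivial, rfl⟩, hij⟩
      · exact Or.inl h
  have hNj : (g ⊔ e).neighborSet j = insert i (g.neighborSet j) := by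
    ext k
    simp only [SimpleGraph.mem_neighborSet, SimpleGraph.sup_adj, he, SimpleGraph.edge_adj,
      Set.mem_insert_iff]
    constructor
    · rintro (h | ⟨⟨rfl, rfl⟩ | ⟨-, rfl⟩, hne⟩)
      · exact Or.inr h
      · exact absurd rfl hne
      · exact Or.inl rfl
    · rintro (rfl | h)
      · exact Or.inr ⟨Or.inr ⟨trivial, rfl⟩, hij.symm⟩
      · exact Or.inl h
  have hjni : j ∉ g.neighborSet i := fun h => hadj h
  have hinj : i ∉ g.neighborSet j := fun h => hadj (g.adj_symm h)
  have hdi' : deg (g ⊔ e) i = deg g i + 1 := by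
    unfold deg
    rw [hNi]
    exact Set.ncard_insert_of_notMem hjni (Set.toFinite _)
  have hdj' : deg (g ⊔ e) j = B := by
    unfold deg
    rw [hNj, Set.ncard_insert_of_notMem hinj (Set.toFinite _)]
    have : deg g j = B - 1 := hdj
    unfold deg at this
    omega
  have hdk : ∀ k ∈ g.neighborSet i, deg (g ⊔ e) k = deg g k := by
    intro k hk
    have hki : k ≠ i := fun h => g.loopless.irrefl i (h ▸ hk)
    have hkj : k ≠ j := fun h => hadj (h ▸ hk)
    unfold deg
    congr 1
    ext m
    simp only [SimpleGraph.mem_neighborSet, SimpleGraph.sup_adj, he, SimpleGraph.edge_adj]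
    constructor
    · rintro (h | ⟨⟨rfl, rfl⟩ | ⟨rfl, rfl⟩, hne⟩)
      · exact h
      · exact absurd rfl hki
      · exact absurd rfl hkj
    · exact fun h => Or.inl h
  have hF : ((g ⊔ e).neighborSet i).toFinite.toFinset
      = insert j ((g.neighborSet i).toFinite.toFinset) := by
    ext k
    simp only [Set.Finite.mem_toFinset, Finset.mem_insert, hNi, Set.mem_insert_iff]
  have hjF : j ∉ (g.neighborSet i).toFinite.toFinset := by simpa using hjni
  have hutil : util α v c p (g ⊔ e) i =
      α * v * (1 - (1 - p) ^ (deg g i + 1)) -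
        (α * c * (1 - (1 - p) ^ B) / (B : ℝ) +
          ∑ k ∈ (g.neighborSet i).toFinite.toFinset,
            α * c * (1 - (1 - p) ^ deg g k) / (deg g k)) := by
    unfold util
    rw [hdi', hF, Finset.sum_insert hjF, hdj']
    have hsum : ∑ k ∈ (g.neighborSet i).toFinite.toFinset,
        α * c * (1 - (1 - p) ^ deg (g ⊔ e) k) / (deg (g ⊔ e) k)
        = ∑ k ∈ (g.neighborSet i).toFinite.toFinset,
        α * c * (1 - (1 - p) ^ deg g k) / (deg g k) :=
      Finset.sum_congr rfl (fun k hk => by rw [hdk k (by simpa using hk)])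
    rw [hsum]
  have h0p : (0:ℝ) ≤ 1 - p := by linarith
  have h1p : (1:ℝ) - p ≤ 1 := by linarith
  have hfB : fpay α v c p δ γ B ≥ 0 := (hB B hB1).mpr le_rfl
  unfold fpay at hfB
  have hD : 0 < δ / (1 - δ) := div_pos hδ0 (by linarith)
  have hcγ : 0 < c - γ := by linarith
  have hXpos : 0 < α * v * ((1 - p) ^ (B - 1) - (1 - p) ^ B)
      - α * c / (B : ℝ) * (1 - (1 - p) ^ B) := by
    by_contra h
    push_neg at h
    have hle : δ / (1 - δ) * (α * v * ((1 - p) ^ (B - 1) - (1 - p) ^ B)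
        - α * c / (B : ℝ) * (1 - (1 - p) ^ B)) ≤ 0 :=
      mul_nonpos_of_nonneg_of_nonpos hD.le h
    linarith
  have hmono : (1 - p) ^ (B - 1) ≤ (1 - p) ^ (deg g i) :=
    pow_le_pow_of_le_one h0p h1p (by omega)
  have hstep : α * v * ((1 - p) ^ (B - 1) - (1 - p) ^ B)
      ≤ α * v * ((1 - p) ^ (deg g i) - (1 - p) ^ (deg g i + 1)) := by
    have e1 : (1 - p) ^ B = (1 - p) ^ (B - 1) * (1 - p) := by
      rw [← pow_succ]
      congr 1
      omega
    have e2 : (1 - p) ^ (deg g i + 1) = (1 - p) ^ (deg g i) * (1 - p) := pow_succ _ _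
    rw [e1, e2]
    have hfac : 0 ≤ α * v * p * ((1 - p) ^ (deg g i) - (1 - p) ^ (B - 1)) :=
      mul_nonneg (mul_nonneg (mul_nonneg hα.le hv.le) hp0.le) (sub_nonneg.mpr hmono)
    nlinarith [hfac]
  have hkey : α * c * (1 - (1 - p) ^ B) / (B : ℝ)
      < α * v * ((1 - p) ^ (deg g i) - (1 - p) ^ (deg g i + 1)) := by
    have hq : α * c / (B : ℝ) * (1 - (1 - p) ^ B)
        = α * c * (1 - (1 - p) ^ B) / (B : ℝ) := by ring
    linarith
  rw [hutil]
  unfold util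
  linarith
end

section
/- Let B* be a cooperation bound and suppose v > c. If the graph g is stable, then for every vertex i, u_i(g) ≤ α·(v − c)·(1 − (1−p)^{B*}); moreover this bound is attained (with equality for every vertex) whenever every vertex of g has degree exactly B*. In particular, graphs in which all vertices have degree B* are constrained efficient among stable graphs. -/
open Finset

lemma one_sub_pow_eq (q : ℝ) (n : ℕ) :
    1 - q ^ n = (1 - q) * ∑ i ∈ Finset.range n, q ^ i := by
  linear_combination geom_sum_mul q n

lemma ratio_anti {q : ℝ} (hq0 : 0 ≤ q) (hq1 : q ≤ 1) {m n : ℕ} (hm : 1 ≤ m) (hmn : m ≤ n) :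
    (1 - q ^ n) / n ≤ (1 - q ^ m) / m := by
  have hm0 : (0:ℝ) < m := by exact_mod_cast hm
  have hn0 : (0:ℝ) < n := by exact_mod_cast lt_of_lt_of_le hm hmn
  rw [div_le_div_iff₀ hn0 hm0]
  have hsplit : ∑ i ∈ range n, q ^ i
      = ∑ i ∈ range m, q ^ i + ∑ i ∈ Finset.Ico m n, q ^ i := by
    simp only [range_eq_Ico]
    exact (Finset.sum_Ico_consecutive _ (Nat.zero_le m) hmn).symm
  have hT : ∑ i ∈ Finset.Ico m n, q ^ i ≤ ((n : ℝ) - m) * q ^ m := by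
    have : ∑ i ∈ Finset.Ico m n, q ^ i ≤ ∑ _i ∈ Finset.Ico m n, q ^ m := by
      refine Finset.sum_le_sum fun i hi => ?_
      exact pow_le_pow_of_le_one hq0 hq1 (Finset.mem_Ico.mp hi).1
    simpa [Nat.cast_sub hmn, mul_comm] using this
  have hSm : (m : ℝ) * q ^ m ≤ ∑ i ∈ range m, q ^ i := by
    have : ∑ _i ∈ range m, q ^ m ≤ ∑ i ∈ range m, q ^ i := by
      refine Finset.sum_le_sum fun i hi => ?_
      exact pow_le_pow_of_le_one hq0 hq1 (le_of_lt (Finset.mem_range.mp hi))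
    simpa [mul_comm] using this
  have key : (m : ℝ) * ∑ i ∈ range n, q ^ i ≤ (n : ℝ) * ∑ i ∈ range m, q ^ i := by
    have h1 : (m : ℝ) * ∑ i ∈ Finset.Ico m n, q ^ i ≤ (m : ℝ) * (((n : ℝ) - m) * q ^ m) :=
      mul_le_mul_of_nonneg_left hT hm0.le
    have h2 : ((n : ℝ) - m) * ((m : ℝ) * q ^ m) ≤ ((n : ℝ) - m) * ∑ i ∈ range m, q ^ i :=
      mul_le_mul_of_nonneg_left hSm (sub_nonneg.mpr (by exact_mod_cast hmn))
    nlinarith [hsplit]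
  calc (1 - q ^ n) * m = (1 - q) * ((m : ℝ) * ∑ i ∈ range n, q ^ i) := by
        rw [one_sub_pow_eq]; ring
    _ ≤ (1 - q) * ((n : ℝ) * ∑ i ∈ range m, q ^ i) :=
        mul_le_mul_of_nonneg_left key (by linarith)
    _ = (1 - q ^ m) * n := by rw [one_sub_pow_eq]; ring

lemma pow_gap {q : ℝ} (hq0 : 0 ≤ q) (hq1 : q ≤ 1) {d B : ℕ} (hd : d ≤ B) :
    ((B : ℝ) - d) * (q ^ (B - 1) * (1 - q)) ≤ q ^ d - q ^ B := by
  have h1 : q ^ d - q ^ B = (1 - q) * ∑ i ∈ Finset.Ico d B, q ^ i := by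
    have hsplit : ∑ i ∈ range d, q ^ i + ∑ i ∈ Finset.Ico d B, q ^ i
        = ∑ i ∈ range B, q ^ i := by
      simp only [range_eq_Ico]
      exact Finset.sum_Ico_consecutive _ (Nat.zero_le d) hd
    have e1 := one_sub_pow_eq q d
    have e2 := one_sub_pow_eq q B
    nlinarith [hsplit]
  have h2 : ((B : ℝ) - d) * q ^ (B - 1) ≤ ∑ i ∈ Finset.Ico d B, q ^ i := by
    have : ∑ _i ∈ Finset.Ico d B, q ^ (B - 1) ≤ ∑ i ∈ Finset.Ico d B, q ^ i := by
      refine Finset.sum_le_sum fun i hi => ?_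
      exact pow_le_pow_of_le_one hq0 hq1 (by have := (Finset.mem_Ico.mp hi).2; omega)
    simpa [Nat.cast_sub hd, mul_comm] using this
  calc ((B : ℝ) - d) * (q ^ (B - 1) * (1 - q))
      = (1 - q) * (((B : ℝ) - d) * q ^ (B - 1)) := by ring
    _ ≤ (1 - q) * ∑ i ∈ Finset.Ico d B, q ^ i :=
        mul_le_mul_of_nonneg_left h2 (by linarith)
    _ = q ^ d - q ^ B := h1.symm

variable {V : Type*}

lemma nbhd_del_left [Fintype V] {g : SimpleGraph V} {i j : V} (h : g.Adj i j) :
    (g \ SimpleGraph.edge i j).neighborSet i = g.neighborSet i \ {j} := by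
  have hij : i ≠ j := h.ne
  ext k
  simp only [SimpleGraph.mem_neighborSet, SimpleGraph.sdiff_adj, Set.mem_diff,
    Set.mem_singleton_iff]
  constructor
  · rintro ⟨ha, hn⟩
    refine ⟨ha, fun hk => hn ?_⟩
    rw [SimpleGraph.edge_adj]
    exact ⟨Or.inl ⟨rfl, hk⟩, ha.ne⟩
  · rintro ⟨ha, hk⟩
    refine ⟨ha, fun hn => ?_⟩
    rw [SimpleGraph.edge_adj] at hn
    rcases hn.1 with ⟨-, h2⟩ | ⟨h1, -⟩
    · exact hk h2
    · exact hij h1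

lemma nbhd_del_other [Fintype V] {g : SimpleGraph V} {i j k : V} (hki : k ≠ i) (hkj : k ≠ j) :
    (g \ SimpleGraph.edge i j).neighborSet k = g.neighborSet k := by
  ext l
  simp only [SimpleGraph.mem_neighborSet, SimpleGraph.sdiff_adj]
  constructor
  · exact fun hl => hl.1
  · intro hl
    refine ⟨hl, fun hn => ?_⟩
    rw [SimpleGraph.edge_adj] at hn
    rcases hn.1 with ⟨h1, -⟩ | ⟨h1, -⟩
    · exact hki h1
    · exact hkj h1

lemma deg_pos [Fintype V] {g : SimpleGraph V} {i j : V} (h : g.Adj i j) : 1 ≤ deg g i :=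
  (Set.ncard_pos (Set.toFinite _)).mpr ⟨j, h⟩

lemma deg_del_left [Fintype V] {g : SimpleGraph V} {i j : V} (h : g.Adj i j) :
    deg (g \ SimpleGraph.edge i j) i = deg g i - 1 := by
  rw [deg, nbhd_del_left h, deg]
  exact Set.ncard_diff_singleton_of_mem h

lemma util_del [Fintype V] (α v c p : ℝ) {g : SimpleGraph V} {i j : V} (h : g.Adj i j) :
    util α v c p g i - util α v c p (g \ SimpleGraph.edge i j) i
      = α * v * ((1 - p) ^ (deg g i - 1) - (1 - p) ^ deg g i)
        - α * c * (1 - (1 - p) ^ deg g j) / (deg g j) := by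
  classical
  set g' := g \ SimpleGraph.edge i j with hg'
  have hsetf : ((g'.neighborSet i).toFinite.toFinset : Finset V)
      = ((g.neighborSet i).toFinite.toFinset).erase j := by
    ext k
    simp only [Set.Finite.mem_toFinset, Finset.mem_erase, hg', nbhd_del_left h,
      Set.mem_diff, Set.mem_singleton_iff]
    tauto
  have hdeg' : ∀ k ∈ ((g.neighborSet i).toFinite.toFinset).erase j, deg g' k = deg g k := by
    intro k hk
    have hkj : k ≠ j := (Finset.mem_erase.mp hk).1
    have hki : k ≠ i := by
      have : g.Adj i k := (Set.Finite.mem_toFinset _).mp (Finset.mem_erase.mp hk).2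
      exact this.ne'
    rw [deg, deg, hg', nbhd_del_other hki hkj]
  have hsum' : ∑ k ∈ (g'.neighborSet i).toFinite.toFinset,
        α * c * (1 - (1 - p) ^ deg g' k) / (deg g' k)
      = ∑ k ∈ ((g.neighborSet i).toFinite.toFinset).erase j,
        α * c * (1 - (1 - p) ^ deg g k) / (deg g k) := by
    rw [hsetf]
    exact Finset.sum_congr rfl fun k hk => by rw [hdeg' k hk]
  have hj : j ∈ (g.neighborSet i).toFinite.toFinset := (Set.Finite.mem_toFinset _).mpr h
  have hsum : ∑ k ∈ (g.neighborSet i).toFinite.toFinset,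
        α * c * (1 - (1 - p) ^ deg g k) / (deg g k)
      = α * c * (1 - (1 - p) ^ deg g j) / (deg g j)
        + ∑ k ∈ ((g.neighborSet i).toFinite.toFinset).erase j,
          α * c * (1 - (1 - p) ^ deg g k) / (deg g k) :=
    (Finset.add_sum_erase _ _ hj).symm
  have hd : deg g' i = deg g i - 1 := deg_del_left h
  rw [util, util, hsum', hsum, hd]
  ring

theorem constrained_efficiency [Fintype V] (α v c p δ γ : ℝ)
    (hα : 0 < α) (hv : 0 < v) (hc : 0 < c) (hp0 : 0 < p) (hp1 : p < 1)
    (hδ0 : 0 < δ) (hδ1 : δ < 1) (hγ0 : 0 ≤ γ) (hγc : γ < c) (hvc : c < v)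
    (B : ℕ) (hB : IsCoopBound α v c p δ γ B) :
    (∀ g : SimpleGraph V, Stable α v c p δ γ g →
      ∀ i : V, util α v c p g i ≤ α * (v - c) * (1 - (1 - p) ^ B)) ∧
    (∀ g : SimpleGraph V, (∀ i : V, deg g i = B) →
      ∀ i : V, util α v c p g i = α * (v - c) * (1 - (1 - p) ^ B)) := by
  have hq0 : (0:ℝ) ≤ 1 - p := by linarith
  have hq1 : (1:ℝ) - p ≤ 1 := by linarith
  have hκ : 0 < δ / (1 - δ) := div_pos hδ0 (by linarith)
  constructor
  · intro g hg i
    have hdegB : ∀ k : V, deg g k ≤ B := by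
      obtain ⟨m, -, hm⟩ := Finset.exists_mem_eq_sup (Finset.univ : Finset V)
        ⟨i, Finset.mem_univ i⟩ (deg g)
      have hmax : ∀ k, deg g k ≤ deg g m := fun k => hm ▸ Finset.le_sup (Finset.mem_univ k)
      rcases Nat.eq_zero_or_pos (deg g m) with hm0 | hm0
      · intro k; have := hmax k; omega
      · obtain ⟨j, hj⟩ := (Set.ncard_pos (Set.toFinite _)).mp hm0
        have hadj : g.Adj m j := hj
        obtain ⟨hs, -⟩ := hg m j hadj
        rw [util_del α v c p hadj] at hs
        have hj1 : 1 ≤ deg g j := deg_pos hadj.symm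
        have hjm : deg g j ≤ deg g m := hmax j
        have hr : (1 - (1-p) ^ deg g m) / (deg g m) ≤ (1 - (1-p) ^ deg g j) / (deg g j) :=
          ratio_anti hq0 hq1 hj1 hjm
        have hr2 : α * c * ((1 - (1-p) ^ deg g m) / (deg g m))
            ≤ α * c * ((1 - (1-p) ^ deg g j) / (deg g j)) :=
          mul_le_mul_of_nonneg_left hr (by positivity)
        have hfD : fpay α v c p δ γ (deg g m) ≥ 0 := by
          rw [fpay]
          have hY : α * v * ((1-p) ^ (deg g m - 1) - (1-p) ^ deg g m)
                - α * c * (1 - (1-p) ^ deg g j) / (deg g j)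
              ≤ α * v * ((1-p) ^ (deg g m - 1) - (1-p) ^ deg g m)
                - α * c / (deg g m) * (1 - (1-p) ^ deg g m) := by
            have e1 : α * c / (deg g m : ℝ) * (1 - (1-p) ^ deg g m)
                = α * c * ((1 - (1-p) ^ deg g m) / (deg g m)) := by ring
            have e2 : α * c * (1 - (1-p) ^ deg g j) / (deg g j)
                = α * c * ((1 - (1-p) ^ deg g j) / (deg g j)) := by ring
            rw [e1, e2]
            linarith
          have hmul := mul_le_mul_of_nonneg_left hY hκ.le
          linarith
        have hD : deg g m ≤ B := (hB (deg g m) hm0).mp hfD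
        exact fun k => le_trans (hmax k) hD
    rcases Nat.eq_zero_or_pos (deg g i) with hd0 | hd1
    · have hemp : g.neighborSet i = ∅ := by
        have := hd0
        rwa [deg, Set.ncard_eq_zero (Set.toFinite _)] at this
      have hfe : (g.neighborSet i).toFinite.toFinset = (∅ : Finset V) :=
        Set.Finite.toFinset_eq_empty.mpr hemp
      rw [util, hd0, hfe]
      have h1 : (1-p) ^ B ≤ 1 := pow_le_one₀ hq0 hq1
      simp only [pow_zero, sub_self, mul_zero, Finset.sum_empty, sub_zero]
      exact mul_nonneg (mul_nonneg hα.le (by linarith)) (by linarith)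
    · have hB1 : 1 ≤ B := le_trans hd1 (hdegB i)
      have hfB : fpay α v c p δ γ B ≥ 0 := (hB B hB1).mpr le_rfl
      rw [fpay] at hfB
      have hZpos : 0 < α * v * ((1-p)^(B-1) - (1-p)^B) - α * c / B * (1 - (1-p)^B) := by
        by_contra hle
        push_neg at hle
        have : δ / (1 - δ) * (α * v * ((1-p)^(B-1) - (1-p)^B)
            - α * c / B * (1 - (1-p)^B)) ≤ 0 :=
          mul_nonpos_iff.mpr (Or.inl ⟨hκ.le, hle⟩)
        linarith
      have hkey : α * c * (1 - (1-p)^B) / B ≤ α * v * ((1-p)^(B-1) - (1-p)^B) := by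
        have e : α * c / (B:ℝ) * (1 - (1-p)^B) = α * c * (1 - (1-p)^B) / B := by ring
        linarith [hZpos, e]
      have hcard : ((g.neighborSet i).toFinite.toFinset).card = deg g i := by
        rw [deg]
        exact (Set.ncard_eq_toFinset_card _ _).symm
      have hterm : ∀ j ∈ (g.neighborSet i).toFinite.toFinset,
          α * c * (1 - (1-p)^B) / B ≤ α * c * (1 - (1-p)^(deg g j)) / (deg g j) := by
        intro j hj
        have hadj : g.Adj i j := (Set.Finite.mem_toFinset _).mp hj
        have h1 : 1 ≤ deg g j := deg_pos hadj.symm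
        have h2 : deg g j ≤ B := hdegB j
        have hr := ratio_anti hq0 hq1 h1 h2
        calc α * c * (1 - (1-p)^B) / B = α * c * ((1 - (1-p)^B) / B) := by ring
          _ ≤ α * c * ((1 - (1-p)^(deg g j)) / (deg g j)) :=
              mul_le_mul_of_nonneg_left hr (by positivity)
          _ = α * c * (1 - (1-p)^(deg g j)) / (deg g j) := by ring
      have hsum : (deg g i : ℝ) * (α * c * (1 - (1-p)^B) / B)
          ≤ ∑ j ∈ (g.neighborSet i).toFinite.toFinset,
              α * c * (1 - (1-p)^(deg g j)) / (deg g j) := by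
        have := Finset.sum_le_sum hterm
        rw [Finset.sum_const, hcard, nsmul_eq_mul] at this
        exact this
      have hub : util α v c p g i ≤ α * v * (1 - (1-p)^(deg g i))
          - (deg g i : ℝ) * (α * c * (1 - (1-p)^B) / B) := by
        rw [util]
        linarith
      have hgap := pow_gap hq0 hq1 (hdegB i)
      have hdB : (0:ℝ) ≤ (B:ℝ) - (deg g i : ℝ) := sub_nonneg.mpr (by exact_mod_cast hdegB i)
      have h5 : ((B:ℝ) - deg g i) * (α * c * (1 - (1-p)^B) / B)
          ≤ ((B:ℝ) - deg g i) * (α * v * ((1-p)^(B-1) - (1-p)^B)) :=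
        mul_le_mul_of_nonneg_left hkey hdB
      have hq' : (1-p)^(B-1) * (1-p) = (1-p)^B := by
        rw [← pow_succ]
        congr 1
        omega
      have h6 : ((B:ℝ) - deg g i) * (α * v * ((1-p)^(B-1) - (1-p)^B))
          ≤ α * v * ((1-p)^(deg g i) - (1-p)^B) := by
        have h7 : (α*v) * (((B:ℝ) - deg g i) * ((1-p)^(B-1) * (1 - (1-p))))
            ≤ (α*v) * ((1-p)^(deg g i) - (1-p)^B) :=
          mul_le_mul_of_nonneg_left hgap (by positivity)
        calc ((B:ℝ) - deg g i) * (α * v * ((1-p)^(B-1) - (1-p)^B))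
            = (α*v) * (((B:ℝ) - deg g i) * ((1-p)^(B-1) * (1 - (1-p)))) := by
              rw [← hq']; ring
          _ ≤ _ := h7
      have hBne : (B:ℝ) ≠ 0 := Nat.cast_ne_zero.mpr (by omega)
      have hBW : (B:ℝ) * (α * c * (1 - (1-p)^B) / B) = α * c * (1 - (1-p)^B) := by
        field_simp
      have hrhs : α * (v - c) * (1 - (1-p)^B)
          = α * v * (1 - (1-p)^B) - (B:ℝ) * (α * c * (1 - (1-p)^B) / B) := by
        rw [hBW]; ring
      rw [hrhs]
      nlinarith [hub, h5, h6]
  · intro g hdeg i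
    have hcard : ((g.neighborSet i).toFinite.toFinset).card = B := by
      rw [← hdeg i, deg]
      exact (Set.ncard_eq_toFinset_card _ _).symm
    have hsum : ∑ j ∈ (g.neighborSet i).toFinite.toFinset,
        α * c * (1 - (1-p)^(deg g j)) / (deg g j)
        = (B:ℝ) * (α * c * (1 - (1-p)^B) / B) := by
      rw [Finset.sum_congr rfl (fun j _ => by rw [hdeg j]), Finset.sum_const, hcard,
        nsmul_eq_mul]
    rw [util, hdeg i, hsum]
    rcases Nat.eq_zero_or_pos B with h0 | h1
    · subst h0; simp
    · have hBne : (B:ℝ) ≠ 0 := Nat.cast_ne_zero.mpr (by omega)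
      field_simp
end
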